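/- For even m ≥ 2, the number of primitive elements of length m in the free group F_2 is greater than (4/3)·(√3)^m. -/

import Mathlib

/-!
The eight words `x^±1 y^±1`, `y^±1 x^±1` are primitive (images of a generator under a transvection
followed by sign changes), hence so is every conjugate `w a b w⁻¹` of such a word `a b`.
If the conjugator `w` is reduced and ends in `a` or `b⁻¹`, the word `w a b w⁻¹` is already
reduced, so these conjugates are pairwise distinct primitive elements of length `2 |w| + 2`.
Reduced words of length `k + 1` ending in a prescribed letter number `3 ^ k`, which gives
`8 · 2 · 3 ^ k = 16 · 3 ^ k > 12 · 3 ^ k = (4 / 3) √3 ^ (2 k + 4)` primitive elements of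
length `2 k + 4`; in length `2` the eight words themselves exceed `(4 / 3) · 3 = 4`.
-/

def IsPrimitive (u : FreeGroup (Fin 2)) : Prop :=
  ∃ φ : FreeGroup (Fin 2) ≃* FreeGroup (Fin 2), φ (FreeGroup.of 0) = u

namespace FreeGroup

variable {α : Type*}

theorem head?_invRev (L : List (α × Bool)) :
    (invRev L).head? = L.getLast?.map fun c => (c.1, !c.2) := by
  rw [invRev, List.head?_reverse, List.getLast?_map]

theorem mk_append_append_invRev (w L : List (α × Bool)) :
    mk (w ++ L ++ invRev w) = mk w * mk L * (mk w)⁻¹ := by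
  rw [inv_mk, mul_mk, mul_mk]

def signAut (ε : α → Bool) : FreeGroup α ≃* FreeGroup α :=
  have hinv : (lift fun k => mk [(k, ε k)]).comp (lift fun k => mk [(k, ε k)]) =
      MonoidHom.id _ :=
    ext_hom _ _ fun k => by cases h : ε k <;> simp [h, of, inv_mk, invRev]
  MonoidHom.toMulEquiv _ _ hinv hinv

@[simp]
theorem signAut_of (ε : α → Bool) (k : α) : signAut ε (of k) = mk [(k, ε k)] := by
  simp [signAut]

variable [DecidableEq α]

theorem IsReduced.invRev {L : List (α × Bool)} (h : IsReduced L) : IsReduced (invRev L) :=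
  isReduced_iff_reduce_eq.mpr (by rw [reduce_invRev, h.reduce_eq])

theorem isReduced_append_append_invRev {w L : List (α × Bool)} (hw : IsReduced w)
    (hL : IsReduced L) (hL₀ : L ≠ [])
    (hhead : ∀ c ∈ w.getLast?, ∀ a ∈ L.head?, c.1 = a.1 → c.2 = a.2)
    (hlast : ∀ c ∈ w.getLast?, ∀ b ∈ L.getLast?, b.1 = c.1 → b.2 = !c.2) :
    IsReduced (w ++ L ++ invRev w) := by
  refine List.isChain_append.mpr ⟨List.isChain_append.mpr ⟨hw, hL, hhead⟩, hw.invRev, ?_⟩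
  rw [List.getLast?_append_of_ne_nil _ hL₀, head?_invRev]
  intro b hb y hy
  obtain ⟨c, hc, rfl⟩ := Option.mem_map.mp hy
  exact hlast c hc b hb

def transvection (i j : α) (hij : i ≠ j) : FreeGroup α ≃* FreeGroup α :=
  MonoidHom.toMulEquiv
    (lift fun k => if k = i then of i * of j else of k)
    (lift fun k => if k = i then of i * (of j)⁻¹ else of k)
    (ext_hom _ _ fun k => by by_cases hk : k = i <;> simp [hk, hij.symm])
    (ext_hom _ _ fun k => by by_cases hk : k = i <;> simp [hk, hij.symm])

@[simp]
theorem transvection_of_self (i j : α) (hij : i ≠ j) :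
    transvection i j hij (of i) = of i * of j := by
  simp [transvection]

end FreeGroup

open FreeGroup

theorem IsPrimitive.map {u : FreeGroup (Fin 2)} (h : IsPrimitive u)
    (ψ : FreeGroup (Fin 2) ≃* FreeGroup (Fin 2)) : IsPrimitive (ψ u) :=
  let ⟨φ, hφ⟩ := h
  ⟨φ.trans ψ, by simp [hφ]⟩

theorem isPrimitive_of (i : Fin 2) : IsPrimitive (of i) :=
  ⟨freeGroupCongr (Equiv.swap 0 i), by simp⟩

def pairWord (p : Fin 2 × Bool × Bool) : List (Fin 2 × Bool) :=
  [(p.1, p.2.1), (p.1 + 1, p.2.2)]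

theorem isPrimitive_mk_pairWord (p : Fin 2 × Bool × Bool) : IsPrimitive (mk (pairWord p)) := by
  obtain ⟨t, s₁, s₂⟩ := p
  have := ((isPrimitive_of t).map (transvection t (t + 1) (by simp))).map
    (signAut fun k => if k = t then s₁ else s₂)
  simpa [pairWord, mul_mk] using this

theorem isReduced_pairWord (p : Fin 2 × Bool × Bool) : IsReduced (pairWord p) := by
  simp [pairWord]

theorem pairWord_injective : Function.Injective pairWord := by
  rintro ⟨t, s₁, s₂⟩ ⟨t', s₁', s₂'⟩ h
  simp_all [pairWord]

def precedingLetter (i : Fin 3) (q : Fin 2 × Bool) : Fin 2 × Bool :=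
  match i with
  | 0 => q
  | 1 => (q.1 + 1, false)
  | 2 => (q.1 + 1, true)

theorem precedingLetter_compat (i : Fin 3) (q : Fin 2 × Bool) :
    (precedingLetter i q).1 = q.1 → (precedingLetter i q).2 = q.2 := by
  fin_cases i <;> simp [precedingLetter]

theorem precedingLetter_left_injective (q : Fin 2 × Bool) :
    Function.Injective (precedingLetter · q) := by
  intro i j h
  fin_cases i <;> fin_cases j <;>
    simp_all [precedingLetter, Prod.ext_iff]

def wordOfChoices : List (Fin 3) → Fin 2 × Bool → List (Fin 2 × Bool)
  | [], c => [c]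
  | i :: v, c => precedingLetter i (wordOfChoices v c).headI :: wordOfChoices v c

theorem wordOfChoices_ne_nil (v : List (Fin 3)) (c : Fin 2 × Bool) : wordOfChoices v c ≠ [] := by
  cases v <;> simp [wordOfChoices]

theorem length_wordOfChoices (v : List (Fin 3)) (c : Fin 2 × Bool) :
    (wordOfChoices v c).length = v.length + 1 := by
  induction v with
  | nil => rfl
  | cons i v ih => simp [wordOfChoices, ih]

theorem getLast?_wordOfChoices (v : List (Fin 3)) (c : Fin 2 × Bool) :
    (wordOfChoices v c).getLast? = some c := by
  induction v with
  | nil => rfl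
  | cons i v ih =>
    rw [wordOfChoices, List.getLast?_cons, ih]; rfl

theorem isReduced_wordOfChoices (v : List (Fin 3)) (c : Fin 2 × Bool) :
    IsReduced (wordOfChoices v c) := by
  induction v with
  | nil => exact .singleton
  | cons i v ih =>
    obtain ⟨q, w, hw⟩ := List.exists_cons_of_ne_nil (wordOfChoices_ne_nil v c)
    rw [wordOfChoices, hw, List.headI_cons, isReduced_cons_cons]
    exact ⟨precedingLetter_compat i q, hw ▸ ih⟩

theorem wordOfChoices_inj {v v' : List (Fin 3)} {c c' : Fin 2 × Bool}
    (hlen : v.length = v'.length) (h : wordOfChoices v c = wordOfChoices v' c') :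
    v = v' ∧ c = c' := by
  induction v generalizing v' with
  | nil =>
    obtain rfl := List.length_eq_zero_iff.mp hlen.symm
    simpa [wordOfChoices] using h
  | cons i v ih =>
    obtain ⟨i', v', rfl⟩ := List.exists_cons_of_length_eq_add_one hlen.symm
    simp only [wordOfChoices, List.cons.injEq] at h
    obtain ⟨rfl, rfl⟩ := ih (by simpa using hlen) h.2
    exact ⟨by rw [precedingLetter_left_injective _ h.1], rfl⟩

def primitivesOfLength (m : ℕ) : Set (FreeGroup (Fin 2)) :=
  {u | IsPrimitive u ∧ u.toWord.length = m}

theorem finite_primitivesOfLength (m : ℕ) : (primitivesOfLength m).Finite :=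
  ((List.finite_length_eq _ m).preimage toWord_injective.injOn).subset fun _ hu => hu.2

theorem card_le_ncard_primitivesOfLength {ι : Type*} (j : ℕ) (w : ι → List (Fin 2 × Bool))
    (p : ι → Fin 2 × Bool × Bool) (hinj : Function.Injective fun i => (w i, p i))
    (hlen : ∀ i, (w i).length = j)
    (hred : ∀ i, IsReduced (w i ++ pairWord (p i) ++ invRev (w i))) :
    Nat.card ι ≤ (primitivesOfLength (2 * j + 2)).ncard := by
  have toWord_eq i : (mk (w i ++ pairWord (p i) ++ invRev (w i))).toWord =
      w i ++ pairWord (p i) ++ invRev (w i) := by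
    rw [toWord_mk, (hred i).reduce_eq]
  have hmem i : mk (w i ++ pairWord (p i) ++ invRev (w i)) ∈ primitivesOfLength (2 * j + 2) := by
    refine ⟨?_, ?_⟩
    · rw [mk_append_append_invRev]
      exact (isPrimitive_mk_pairWord (p i)).map (MulAut.conj (mk (w i)))
    · rw [toWord_eq]
      simp only [List.length_append, invRev_length, hlen, pairWord, List.length_cons,
        List.length_nil]
      ring
  have := (finite_primitivesOfLength (2 * j + 2)).to_subtype
  refine Nat.card_le_card_of_injective (fun i => ⟨_, hmem i⟩) fun i i' h => hinj ?_
  have h := congrArg toWord (Subtype.ext_iff.mp h)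
  rw [toWord_eq, toWord_eq, List.append_assoc, List.append_assoc] at h
  obtain ⟨hw, h⟩ := List.append_inj h ((hlen i).trans (hlen i').symm)
  exact Prod.ext hw (pairWord_injective (List.append_inj h rfl).1)

theorem eight_le_ncard_primitivesOfLength_two : 8 ≤ (primitivesOfLength 2).ncard := by
  simpa using card_le_ncard_primitivesOfLength 0 (fun _ => []) id
    (fun _ _ h => (Prod.ext_iff.mp h).2) (fun _ => rfl) fun p => by simpa using isReduced_pairWord p

/-- With `pairWord p = [a, b]`: the letters `a` and `b⁻¹`, the only ones a conjugator `w` can end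
in for `w a b w⁻¹` to be reduced. -/
def conjugatorEnd (p : Fin 2 × Bool × Bool) (e : Bool) : Fin 2 × Bool :=
  cond e (p.1, p.2.1) (p.1 + 1, !p.2.2)

theorem conjugatorEnd_injective (p : Fin 2 × Bool × Bool) :
    Function.Injective (conjugatorEnd p) := by
  intro e e' h
  cases e <;> cases e' <;> simp_all [conjugatorEnd, Prod.ext_iff]

theorem sixteen_mul_three_pow_le_ncard_primitivesOfLength (k : ℕ) :
    16 * 3 ^ k ≤ (primitivesOfLength (2 * k + 4)).ncard := by
  rw [show 2 * k + 4 = 2 * (k + 1) + 2 by ring]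
  have := card_le_ncard_primitivesOfLength
    (ι := (Fin 2 × Bool × Bool) × Bool × (Fin k → Fin 3)) (k + 1)
    (fun d => wordOfChoices (List.ofFn d.2.2) (conjugatorEnd d.1 d.2.1)) (·.1) ?_ ?_ ?_
  · convert this using 1
    simp only [Nat.card_eq_fintype_card, Fintype.card_prod, Fintype.card_fin, Fintype.card_bool,
      Fintype.card_fun]
    ring
  · rintro ⟨p, e, v⟩ ⟨p', e', v'⟩ h
    simp only [Prod.mk.injEq] at h
    obtain ⟨hw, rfl⟩ := h
    obtain ⟨hv, hc⟩ := wordOfChoices_inj (by simp) hw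
    rw [conjugatorEnd_injective p hc, List.ofFn_inj.mp hv]
  · intro d
    simp [length_wordOfChoices]
  · rintro ⟨⟨t, s₁, s₂⟩, e, v⟩
    refine isReduced_append_append_invRev (isReduced_wordOfChoices _ _) (isReduced_pairWord _)
      (by simp [pairWord]) ?_ ?_ <;>
    · simp only [getLast?_wordOfChoices, Option.mem_some_iff]
      rintro _ rfl
      cases e <;> simp [conjugatorEnd, pairWord]

theorem four_mul_three_pow_lt_ncard_primitivesOfLength (n : ℕ) :
    4 * 3 ^ n < (primitivesOfLength (2 * n + 2)).ncard := by
  cases n with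
  | zero => exact lt_of_lt_of_le (by norm_num) eight_le_ncard_primitivesOfLength_two
  | succ k =>
    have : 0 < 3 ^ k := by positivity
    calc 4 * 3 ^ (k + 1) < 16 * 3 ^ k := by rw [pow_succ]; linarith
      _ ≤ _ := sixteen_mul_three_pow_le_ncard_primitivesOfLength k

theorem primitive_count_even (m : ℕ) (hm : Even m) (h2 : 2 ≤ m) :
    (4 / 3 : ℝ) * (Real.sqrt 3) ^ m <
      (({u : FreeGroup (Fin 2) | IsPrimitive u ∧ u.toWord.length = m}.ncard : ℝ)) := by
  obtain ⟨n, rfl⟩ : ∃ n, m = 2 * n + 2 := ⟨m / 2 - 1, by obtain ⟨r, rfl⟩ := hm; omega⟩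
  have hpow : (4 / 3 : ℝ) * Real.sqrt 3 ^ (2 * n + 2) = 4 * 3 ^ n := by
    rw [pow_add, pow_mul, Real.sq_sqrt zero_le_three]
    ring
  rw [hpow]
  exact_mod_cast four_mul_three_pow_lt_ncard_primitivesOfLength n
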